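/- arXiv:1506.08714 — 2 statements merged into one kernel-verified Lean document; each statement's English description precedes it below -/
import Mathlib

section
/- Let Y be a topological space and let f : {−1,1}^ℕ → Y be a continuous map (where {−1,1}^ℕ carries the product topology of the discrete topology on {−1,1}). Suppose that for every finite word w ∈ {−1,1}^* the images of the two cylinders extending w intersect: f([w,−1]) ∩ f([w,+1]) ≠ ∅. Then the image of f is path connected. -/
/-!
Binary sequences parametrize `[0, 1]` through `Real.ofDigits`. Given `x` and `y`, bisect the pair
`(x, y)` repeatedly: a pair `(p, q)` agreeing on the first `n` coordinates splits, by the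
hypothesis at level `n`, into `(p, a)` and `(a', q)` with `f a = f a'`, both agreeing on the first
`n + 1` coordinates. Following a binary sequence `s` through the bisections gives a point `Φ s`;
`Φ` is continuous because `(Φ s) i` depends only on `s` below `i + 1`. The two expansions
`v0111…` and `v1000…` of a dyadic rational are sent to the points `a` and `a'` of one bisection,
so `f ∘ Φ` factors through `ofDigits`, a quotient map onto `[0, 1]`, and the factor is a path from
`f x` to `f y` in the range of `f`.
-/

section

open Function PiNat Set Topology

namespace Real

theorem ofDigits_eq_zero_iff {b : ℕ} [NeZero b] {d : ℕ → Fin b} :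
    ofDigits d = 0 ↔ ∀ i, d i = 0 := by
  rw [ofDigits, ← summable_ofDigitsTerm.hasSum_iff,
    hasSum_zero_iff_of_nonneg fun _ => ofDigitsTerm_nonneg]
  simp [funext_iff, ofDigitsTerm, NeZero.ne b, Fin.val_eq_zero_iff]

theorem ofDigits_add_ofDigits_rev {b : ℕ} [NeZero b] (d : ℕ → Fin (b + 1)) :
    ofDigits d + ofDigits (fun i => (d i).rev) = 1 := by
  rw [← ofDigits_const_last_eq_one b, ofDigits, ofDigits, ofDigits,
    ← summable_ofDigitsTerm.tsum_add summable_ofDigitsTerm]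
  congr 1 with i
  simp only [ofDigitsTerm, Fin.val_rev, Fin.val_last, ← add_mul]
  congr 1
  have := (d i).isLt
  rw [← Nat.cast_add]; congr 1; omega

theorem ofDigits_eq_one_iff {b : ℕ} [NeZero b] {d : ℕ → Fin (b + 1)} :
    ofDigits d = 1 ↔ ∀ i, d i = Fin.last b := by
  refine ⟨fun h i => ?_, fun h => funext h ▸ ofDigits_const_last_eq_one b⟩
  have h0 : ofDigits (fun i => (d i).rev) = 0 := by
    linarith [ofDigits_add_ofDigits_rev d]
  simpa [Fin.rev_eq_iff] using ofDigits_eq_zero_iff.1 h0 i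

theorem eq_last_and_eq_zero_of_ofDigits_eq {b : ℕ} [NeZero b] {d d' : ℕ → Fin (b + 1)} {k : ℕ}
    (hdd' : d' ∈ cylinder d k) (hk : (d k : ℕ) + 1 = d' k) (h : ofDigits d = ofDigits d') :
    (∀ i > k, d i = Fin.last b) ∧ ∀ i > k, d' i = 0 := by
  have hprefix : ∑ i ∈ Finset.range k, ofDigitsTerm d i = ∑ i ∈ Finset.range k, ofDigitsTerm d' i :=
    Finset.sum_congr rfl fun i hi => by simp only [ofDigitsTerm, hdd' i (Finset.mem_range.1 hi)]
  rw [ofDigits_eq_sum_add_ofDigits d (k + 1), ofDigits_eq_sum_add_ofDigits d' (k + 1),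
    Finset.sum_range_succ, Finset.sum_range_succ, hprefix] at h
  simp only [ofDigitsTerm, ← hk] at h
  have htail : ofDigits (fun i => d (i + (k + 1))) = 1 + ofDigits (fun i => d' (i + (k + 1))) := by
    push_cast at h
    refine mul_left_cancel₀ (by positivity : (((b : ℝ) + 1) ^ (k + 1))⁻¹ ≠ 0) ?_
    linarith
  have h1 := ofDigits_le_one fun i => d (i + (k + 1))
  have h0 := ofDigits_nonneg fun i => d' (i + (k + 1))
  have hd := ofDigits_eq_one_iff.1 (by linarith : ofDigits (fun i => d (i + (k + 1))) = 1)
  have hd' := ofDigits_eq_zero_iff.1 (by linarith : ofDigits (fun i => d' (i + (k + 1))) = 0)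
  exact ⟨fun i hi => Nat.sub_add_cancel hi ▸ hd (i - (k + 1)),
    fun i hi => Nat.sub_add_cancel hi ▸ hd' (i - (k + 1))⟩

end Real

namespace PiNat

variable {E : ℕ → Type*}

theorem cylinder_update_succ {x y : ∀ n, E n} {n : ℕ} (h : y ∈ cylinder x n) :
    cylinder (update x n (y n)) (n + 1) = cylinder y (n + 1) := by
  refine mem_cylinder_iff_eq.1 fun i hi => ?_
  rcases Nat.lt_succ_iff_lt_or_eq.1 hi with hi | rfl
  · simp [hi.ne, h i hi]
  · simp

theorem eq_of_forall_ge_mem_cylinder {x y : ∀ n, E n} {n : ℕ} (h : ∀ m ≥ n, y ∈ cylinder x m) :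
    y = x :=
  funext fun i => h (max n (i + 1)) (le_max_left _ _) i (by omega)

end PiNat

variable {β Y : Type*}

theorem joinedIn_range_of_ofDigits_eq [TopologicalSpace Y] {b : ℕ} [NeZero b]
    {g : (ℕ → Fin (b + 1)) → Y}
    (hg : Continuous g) (hfib : ∀ d d', Real.ofDigits d = Real.ofDigits d' → g d = g d') :
    JoinedIn (range g) (g fun _ => 0) (g fun _ => Fin.last b) := by
  let c : (ℕ → Fin (b + 1)) → unitInterval :=
    fun d => ⟨Real.ofDigits d, Real.ofDigits_nonneg d, Real.ofDigits_le_one d⟩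
  have hc : IsQuotientMap c := by
    refine .of_surjective_continuous (fun t => ?_) (Real.continuous_ofDigits.subtype_mk _)
    obtain ⟨d, -, hd⟩ := Real.ofDigits_SurjOn (Nat.succ_lt_succ (NeZero.pos b)) t.2
    exact ⟨d, Subtype.ext hd⟩
  choose sec hsec using hc.surjective
  have hgc : ∀ d, g (sec (c d)) = g d := fun d => hfib _ _ (congrArg Subtype.val (hsec (c d)))
  have hcont : Continuous (g ∘ sec) := hc.continuous_iff.2 (by simpa [comp_def, hgc] using hg)
  have h0 : c (fun _ => 0) = 0 := Subtype.ext (Real.ofDigits_eq_zero_iff.2 fun _ => rfl)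
  have h1 : c (fun _ => Fin.last b) = 1 := Subtype.ext (Real.ofDigits_const_last_eq_one b)
  refine ⟨⟨⟨g ∘ sec, hcont⟩, ?_, ?_⟩, fun t => mem_range_self _⟩
  · simp [← h0, hgc]
  · simp [← h1, hgc]

/-- `cylinder x (n + 1)` and `cylinder (update x n b) (n + 1)` are the cylinders `[w, x n]` and
`[w, b]` on the word `w = x 0 ⋯ x (n - 1)`. -/
def SiblingCylindersMeet (f : (ℕ → β) → Y) : Prop :=
  ∀ (x : ℕ → β) (n : ℕ) (b : β),
    (f '' cylinder x (n + 1) ∩ f '' cylinder (update x n b) (n + 1)).Nonempty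

theorem SiblingCylindersMeet.exists_link {f : (ℕ → β) → Y} (h : SiblingCylindersMeet f) :
    ∃ link : ℕ → (ℕ → β) → (ℕ → β) → (ℕ → β) × (ℕ → β),
      (∀ n p q, q ∈ cylinder p n →
        (link n p q).1 ∈ cylinder p (n + 1) ∧ (link n p q).2 ∈ cylinder q (n + 1)) ∧
      ∀ n p q, f (link n p q).1 = f (link n p q).2 := by
  have : ∀ x n b, ∃ a a', (a ∈ cylinder x (n + 1) ∧ a' ∈ cylinder (update x n b) (n + 1)) ∧
      f a = f a' := by
    intro x n b
    obtain ⟨_, ⟨a, ha, rfl⟩, a', ha', hfa⟩ := h x n b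
    exact ⟨a, a', ⟨ha, ha'⟩, hfa.symm⟩
  choose a a' hmem hfa using this
  refine ⟨fun n p q => (a p n (q n), a' p n (q n)), fun n p q hq => ⟨(hmem ..).1, ?_⟩,
    fun n p q => hfa ..⟩
  exact cylinder_update_succ hq ▸ (hmem ..).2

section Bisect

variable (link : ℕ → (ℕ → β) → (ℕ → β) → (ℕ → β) × (ℕ → β)) (x y : ℕ → β)

/-- The endpoints of the `n`-th bisection step along `s`: digit `0` keeps the left half. -/
def bisect (s : ℕ → Fin 2) : ℕ → (ℕ → β) × (ℕ → β)
  | 0 => (x, y)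
  | n + 1 =>
    let p := bisect s n
    if s n = 0 then (p.1, (link n p.1 p.2).1) else ((link n p.1 p.2).2, p.2)

def bisectLimit (s : ℕ → Fin 2) : ℕ → β := fun i => (bisect link x y s (i + 1)).1 i

variable {link x y}

theorem bisect_congr {s s' : ℕ → Fin 2} {n : ℕ} (h : s' ∈ cylinder s n) :
    bisect link x y s' n = bisect link x y s n := by
  induction n with
  | zero => rfl
  | succ n ih => simp only [bisect, ih (cylinder_anti _ n.le_succ h), h n n.lt_succ_self]

theorem continuous_bisectLimit [TopologicalSpace β] : Continuous (bisectLimit link x y) := by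
  refine continuous_pi fun i => IsLocallyConstant.continuous ?_
  refine (IsLocallyConstant.iff_eventually_eq _).2 fun s => ?_
  filter_upwards [(isOpen_cylinder _ s (i + 1)).mem_nhds (self_mem_cylinder s (i + 1))]
    with s' hs'
  simp only [bisectLimit, bisect_congr hs']

variable (hlink : ∀ n p q, q ∈ cylinder p n →
  (link n p q).1 ∈ cylinder p (n + 1) ∧ (link n p q).2 ∈ cylinder q (n + 1))
include hlink

theorem bisect_snd_mem (s : ℕ → Fin 2) (n : ℕ) :
    (bisect link x y s n).2 ∈ cylinder (bisect link x y s n).1 n := by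
  induction n with
  | zero => simp [cylinder_zero]
  | succ n ih =>
    have h := hlink n _ _ ih
    simp only [bisect]
    split_ifs
    · exact h.1
    · exact (mem_cylinder_comm _ _ _).1 h.2

theorem bisect_succ_fst_mem (s : ℕ → Fin 2) (n : ℕ) :
    (bisect link x y s (n + 1)).1 ∈ cylinder (bisect link x y s n).1 n := by
  have hsnd : (bisect link x y s n).2 ∈ cylinder (bisect link x y s n).1 n :=
    bisect_snd_mem hlink s n
  have h := hlink n _ _ hsnd
  simp only [bisect]
  split_ifs
  · exact self_mem_cylinder _ _
  · exact fun i hi => (cylinder_anti _ n.le_succ h.2 i hi).trans (hsnd i hi)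

theorem bisect_fst_mem_of_le (s : ℕ → Fin 2) {m n : ℕ} (hnm : n ≤ m) :
    (bisect link x y s m).1 ∈ cylinder (bisect link x y s n).1 n := by
  induction m, hnm using Nat.le_induction with
  | base => exact self_mem_cylinder _ _
  | succ m hnm ih =>
    exact fun i hi => (bisect_succ_fst_mem hlink s m i (hi.trans_le hnm)).trans (ih i hi)

theorem bisectLimit_mem (s : ℕ → Fin 2) (n : ℕ) :
    bisectLimit link x y s ∈ cylinder (bisect link x y s n).1 n :=
  fun i hi => (bisect_fst_mem_of_le hlink s hi i i.lt_succ_self).symm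

theorem bisectLimit_eq_fst {s : ℕ → Fin 2} {n : ℕ} (hs : ∀ i ≥ n, s i = 0) :
    bisectLimit link x y s = (bisect link x y s n).1 := by
  have hconst : ∀ m ≥ n, (bisect link x y s m).1 = (bisect link x y s n).1 := by
    intro m hm
    induction m, hm using Nat.le_induction with
    | base => rfl
    | succ m hm ih => simp [bisect, hs m hm, ih]
  exact eq_of_forall_ge_mem_cylinder fun m hm => hconst m hm ▸ bisectLimit_mem hlink s m

theorem bisectLimit_eq_snd {s : ℕ → Fin 2} {n : ℕ} (hs : ∀ i ≥ n, s i = 1) :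
    bisectLimit link x y s = (bisect link x y s n).2 := by
  have hconst : ∀ m ≥ n, (bisect link x y s m).2 = (bisect link x y s n).2 := by
    intro m hm
    induction m, hm using Nat.le_induction with
    | base => rfl
    | succ m hm ih => simp [bisect, hs m hm, ih]
  refine eq_of_forall_ge_mem_cylinder (n := n) fun m hm => hconst m hm ▸ fun i hi => ?_
  exact (bisectLimit_mem hlink s m i hi).trans (bisect_snd_mem hlink s m i hi).symm

theorem bisectLimit_zero : bisectLimit link x y (fun _ => 0) = x :=
  bisectLimit_eq_fst hlink (n := 0) fun _ _ => rfl

theorem bisectLimit_one : bisectLimit link x y (fun _ => 1) = y :=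
  bisectLimit_eq_snd hlink (n := 0) fun _ _ => rfl

theorem apply_bisectLimit_eq {f : (ℕ → β) → Y}
    (hf_link : ∀ n p q, f (link n p q).1 = f (link n p q).2)
    {s s' : ℕ → Fin 2} {k : ℕ} (hss' : s' ∈ cylinder s k) (hk : s k = 0) (hk' : s' k = 1)
    (hs : ∀ i > k, s i = 1) (hs' : ∀ i > k, s' i = 0) :
    f (bisectLimit link x y s) = f (bisectLimit link x y s') := by
  rw [bisectLimit_eq_snd hlink hs, bisectLimit_eq_fst hlink hs']
  simp only [bisect, hk, hk', bisect_congr hss']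
  exact hf_link ..

theorem apply_bisectLimit_eq_of_ofDigits_eq
    {f : (ℕ → β) → Y} (hf_link : ∀ n p q, f (link n p q).1 = f (link n p q).2)
    {s s' : ℕ → Fin 2} (h : Real.ofDigits s = Real.ofDigits s') :
    f (bisectLimit link x y s) = f (bisectLimit link x y s') := by
  rcases eq_or_ne s s' with rfl | hne
  · rfl
  have hcyl : s ∈ cylinder s' (firstDiff s s') := mem_cylinder_firstDiff s s'
  have hcyl' : s' ∈ cylinder s (firstDiff s s') := (mem_cylinder_comm _ _ _).1 hcyl
  have hfin : ∀ a b : Fin 2, a ≠ b → a = 0 ∧ b = 1 ∨ a = 1 ∧ b = 0 := by decide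
  rcases hfin _ _ (apply_firstDiff_ne hne) with ⟨h0, h1⟩ | ⟨h1, h0⟩
  · obtain ⟨ht, ht'⟩ := Real.eq_last_and_eq_zero_of_ofDigits_eq hcyl' (by simp [h0, h1]) h
    exact apply_bisectLimit_eq hlink hf_link hcyl' h0 h1 ht ht'
  · obtain ⟨ht', ht⟩ := Real.eq_last_and_eq_zero_of_ofDigits_eq hcyl (by simp [h0, h1]) h.symm
    exact (apply_bisectLimit_eq hlink hf_link hcyl h0 h1 ht' ht).symm

end Bisect

theorem SiblingCylindersMeet.isPathConnected_range [TopologicalSpace β] [Nonempty β]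
    [TopologicalSpace Y] {f : (ℕ → β) → Y} (hf : Continuous f) (h : SiblingCylindersMeet f) :
    IsPathConnected (range f) := by
  obtain ⟨link, hlink, hflink⟩ := h.exists_link
  refine isPathConnected_iff.2 ⟨range_nonempty f, ?_⟩
  rintro _ ⟨x, rfl⟩ _ ⟨y, rfl⟩
  have hjoin := joinedIn_range_of_ofDigits_eq (hf.comp (continuous_bisectLimit (x := x) (y := y)))
    fun d d' hdd' => apply_bisectLimit_eq_of_ofDigits_eq hlink hflink hdd'
  rw [comp_apply, comp_apply, bisectLimit_zero hlink] at hjoin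
  exact (bisectLimit_one hlink (x := x) ▸ hjoin).mono (range_comp_subset_range _ _)

theorem siblingCylindersMeet_of_forall_eq_or_eq {f : (ℕ → β) → Y} {b₀ b₁ : β}
    (hβ : ∀ b, b = b₀ ∨ b = b₁)
    (h : ∀ x n,
      (f '' cylinder (update x n b₀) (n + 1) ∩ f '' cylinder (update x n b₁) (n + 1)).Nonempty) :
    SiblingCylindersMeet f := by
  intro x n b
  suffices key : ∀ c c',
      (f '' cylinder (update x n c) (n + 1) ∩ f '' cylinder (update x n c') (n + 1)).Nonempty by
    simpa using key (x n) b
  intro c c'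
  have hrefl (c) : (f '' cylinder (update x n c) (n + 1) ∩
      f '' cylinder (update x n c) (n + 1)).Nonempty :=
    ⟨_, mem_image_of_mem f (self_mem_cylinder _ _), mem_image_of_mem f (self_mem_cylinder _ _)⟩
  rcases hβ c with rfl | rfl <;> rcases hβ c' with rfl | rfl
  · exact hrefl _
  · exact h x n
  · rw [inter_comm]; exact h x n
  · exact hrefl _

theorem setOf_ofFn_eq_cylinder (x : ℕ → β) (n : ℕ) (ε : β) :
    {a : ℕ → β | (∀ i : Fin (List.ofFn fun i : Fin n => x i).length,
        a i = (List.ofFn fun i : Fin n => x i).get i) ∧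
      a (List.ofFn fun i : Fin n => x i).length = ε} = cylinder (update x n ε) (n + 1) := by
  ext a
  simp only [Fin.forall_iff, List.get_eq_getElem, List.getElem_ofFn, List.length_ofFn,
    mem_ofPred_eq, mem_cylinder_iff, Nat.lt_succ_iff_lt_or_eq, or_imp, forall_and, forall_eq,
    update_self]
  exact and_congr_left' (forall₂_congr fun i hi => by rw [update_of_ne hi.ne])

end

/-- If `f : {-1,1}^ℕ → Y` is continuous and for every finite word `w` over
`{-1,1}` the images of the two cylinders `[w,-1]` and `[w,+1]` intersect, then the image
of `f` is path connected. -/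
theorem stmt_4 (Y : Type*) [TopologicalSpace Y]
    (f : (ℕ → ({-1, 1} : Set ℤ)) → Y) (hf : Continuous f)
    (h : ∀ w : List ({-1, 1} : Set ℤ),
      (f '' {a | (∀ i : Fin w.length, a i = w.get i) ∧
          a w.length = ⟨-1, by norm_num⟩} ∩
       f '' {a | (∀ i : Fin w.length, a i = w.get i) ∧
          a w.length = ⟨1, by norm_num⟩}).Nonempty) :
    IsPathConnected (Set.range f) := by
  have : Nonempty ({-1, 1} : Set ℤ) := ⟨⟨1, by norm_num⟩⟩
  refine (siblingCylindersMeet_of_forall_eq_or_eq (b₀ := ⟨-1, by norm_num⟩) (b₁ := ⟨1, by norm_num⟩)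
    ?_ fun x n => ?_).isPathConnected_range hf
  · rintro ⟨b, rfl | rfl⟩ <;> simp
  · simpa only [setOf_ofFn_eq_cylinder] using h (List.ofFn fun i : Fin n => x i)
end

section
/- Let M be a d×d real matrix (d ≥ 1) all of whose complex eigenvalues have modulus strictly less than 1, and let u ∈ ℝ^d. If |det M| < 1/2, then the attractor A_M = {∑_{k=0}^∞ a_k M^k u : (a_k) ∈ {−1,1}^ℕ} has d-dimensional Lebesgue measure zero; in particular, A_M has empty interior. -/
/-!
Splitting off the first sign gives the self-affinity `A_M ⊆ (u + M A_M) ∪ (-u + M A_M)`,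
hence `vol A_M ≤ 2 |det M| vol A_M`. By Gelfand's formula the norms `‖M ^ k‖` decay
geometrically, so the series converge uniformly in the signs and `A_M` is compact, in particular
of finite volume; as `2 |det M| < 1` that volume must vanish, and a Lebesgue-null set has empty
interior.
-/

open Matrix MeasureTheory Filter
open scoped ENNReal

section SpectralRadius

variable {A : Type*} [NormedRing A] [NormedAlgebra ℂ A] [CompleteSpace A]

lemma spectralRadius_lt_one_of_forall_norm_lt_one {a : A}
    (h : ∀ z ∈ spectrum ℂ a, ‖z‖ < 1) : spectralRadius ℂ a < 1 := by
  rcases (spectrum ℂ a).eq_empty_or_nonempty with hσ | hσ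
  · simp [spectralRadius, hσ]
  · simpa using spectrum.spectralRadius_lt_of_forall_lt_of_nonempty hσ (r := 1)
      fun z hz => by simpa [← NNReal.coe_lt_coe] using h z hz

lemma summable_norm_pow_of_spectralRadius_lt_one {a : A} (h : spectralRadius ℂ a < 1) :
    Summable fun n => ‖a ^ n‖ := by
  obtain ⟨r, hρr, hr1⟩ := ENNReal.lt_iff_exists_nnreal_btwn.mp h
  have hgelfand := spectrum.pow_nnnorm_pow_one_div_tendsto_nhds_spectralRadius a
  have hbound : ∀ᶠ n : ℕ in atTop, ‖a ^ n‖ ≤ r ^ n := by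
    filter_upwards [hgelfand.eventually_lt_const hρr, eventually_gt_atTop 0] with n hn hn0
    rw [one_div, ENNReal.rpow_inv_lt_iff (by positivity), ENNReal.rpow_natCast] at hn
    exact_mod_cast hn.le
  exact (summable_geometric_of_lt_one r.2 (by exact_mod_cast hr1)).of_norm_bounded_eventually_nat
    (by simpa using hbound)

end SpectralRadius

section Matrix

attribute [local instance] Matrix.linftyOpNormedAddCommGroup Matrix.linftyOpNormedRing
  Matrix.linftyOpNormedAlgebra

variable {ι : Type*} [Fintype ι] [DecidableEq ι]

lemma linfty_opNorm_map_ofReal (B : Matrix ι ι ℝ) : ‖B.map (algebraMap ℝ ℂ)‖ = ‖B‖ := by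
  simp [linfty_opNorm_def, Complex.nnnorm_real]

lemma summable_norm_pow_mulVec {M : Matrix ι ι ℝ}
    (hM : ∀ z ∈ spectrum ℂ (M.map (algebraMap ℝ ℂ)), ‖z‖ < 1) (u : ι → ℝ) :
    Summable fun k => ‖(M ^ k) *ᵥ u‖ := by
  have hpow : Summable fun k => ‖M ^ k‖ := by
    refine (summable_norm_pow_of_spectralRadius_lt_one
      (spectralRadius_lt_one_of_forall_norm_lt_one hM)).congr fun k => ?_
    rw [← Matrix.map_pow, linfty_opNorm_map_ofReal]
  exact (hpow.mul_right ‖u‖).of_nonneg_of_le (fun _ => norm_nonneg _)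
    fun k => linfty_opNorm_mulVec _ _

end Matrix

def signSequences : Set (ℕ → ℝ) := {a | ∀ k, a k = -1 ∨ a k = 1}

lemma isCompact_signSequences : IsCompact signSequences := by
  have : signSequences = Set.univ.pi fun _ => ({-1, 1} : Set ℝ) := by
    ext a; simp [signSequences, Set.mem_pi]
  rw [this]
  exact isCompact_univ_pi fun _ => (Set.toFinite _).isCompact

lemma tail_mem_signSequences {a : ℕ → ℝ} (ha : a ∈ signSequences) :
    (fun k => a (k + 1)) ∈ signSequences :=
  fun k => ha (k + 1)

section Attractor

variable {E : Type*} [NormedAddCommGroup E] [NormedSpace ℝ E]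

lemma norm_smul_of_mem_signSequences {a : ℕ → ℝ} (ha : a ∈ signSequences) (v : ℕ → E)
    (k : ℕ) : ‖a k • v k‖ = ‖v k‖ := by
  rcases ha k with h | h <;> simp [h]

def attractor (v : ℕ → E) : Set E :=
  (fun a : ℕ → ℝ => ∑' k, a k • v k) '' signSequences

variable [CompleteSpace E] {v : ℕ → E}

lemma summable_smul_of_mem_signSequences (hv : Summable fun k => ‖v k‖) {a : ℕ → ℝ}
    (ha : a ∈ signSequences) : Summable fun k => a k • v k :=
  .of_norm_bounded hv fun k => (norm_smul_of_mem_signSequences ha v k).le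

lemma isCompact_attractor (hv : Summable fun k => ‖v k‖) : IsCompact (attractor v) :=
  isCompact_signSequences.image_of_continuousOn <|
    continuousOn_tsum (fun k => ((continuous_apply k).smul continuous_const).continuousOn) hv
      fun k _ ha => (norm_smul_of_mem_signSequences ha v k).le

lemma attractor_subset_union_image (hv : Summable fun k => ‖v k‖) (L : E →L[ℝ] E)
    (hL : ∀ k, v (k + 1) = L (v k)) :
    attractor v ⊆
      (fun y => v 0 + L y) '' attractor v ∪ (fun y => -v 0 + L y) '' attractor v := by
  rintro _ ⟨a, ha, rfl⟩
  have hshift : ∑' k, a k • v k = a 0 • v 0 + L (∑' k, a (k + 1) • v k) := by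
    rw [(summable_smul_of_mem_signSequences hv ha).tsum_eq_zero_add,
      L.map_tsum (summable_smul_of_mem_signSequences hv (tail_mem_signSequences ha))]
    simp [hL]
  have htail : ∑' k, a (k + 1) • v k ∈ attractor v := ⟨_, tail_mem_signSequences ha, rfl⟩
  rcases ha 0 with h | h
  · exact .inr ⟨_, htail, by simp [hshift, h]⟩
  · exact .inl ⟨_, htail, by simp [hshift, h]⟩

end Attractor

lemma addHaar_eq_zero_of_subset_union_image {E : Type*} [NormedAddCommGroup E]
    [NormedSpace ℝ E] [MeasurableSpace E] [BorelSpace E] [FiniteDimensional ℝ E]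
    (μ : Measure E) [μ.IsAddHaarMeasure] {A : Set E} (hA : μ A ≠ ∞) (L : E →L[ℝ] E)
    (hL : |LinearMap.det (L : E →ₗ[ℝ] E)| < 1 / 2) (c₁ c₂ : E)
    (hsub : A ⊆ (fun y => c₁ + L y) '' A ∪ (fun y => c₂ + L y) '' A) : μ A = 0 := by
  set δ := |LinearMap.det (L : E →ₗ[ℝ] E)|
  have himage (c : E) : μ ((fun y => c + L y) '' A) = ENNReal.ofReal δ * μ A := by
    rw [← Set.image_image (c + ·) L, Set.image_add_left, measure_preimage_add,
      Measure.addHaar_image_continuousLinearMap]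
  have hle : μ A ≤ ENNReal.ofReal (2 * δ) * μ A :=
    calc μ A ≤ μ ((fun y => c₁ + L y) '' A) + μ ((fun y => c₂ + L y) '' A) :=
          (measure_mono hsub).trans (measure_union_le _ _)
      _ = ENNReal.ofReal (2 * δ) * μ A := by
          rw [himage, himage, ENNReal.ofReal_mul zero_le_two, ENNReal.ofReal_ofNat]; ring
  by_contra h0
  have hlt : ENNReal.ofReal (2 * δ) * μ A < 1 * μ A :=
    (ENNReal.mul_lt_mul_iff_left h0 hA).2 (ENNReal.ofReal_lt_one.2 (by linarith))
  exact (hle.trans_lt hlt).ne (one_mul _).symm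

theorem stmt_8_general (d : ℕ) (M : Matrix (Fin d) (Fin d) ℝ)
    (hspec : ∀ κ ∈ spectrum ℂ (M.map (algebraMap ℝ ℂ)), ‖κ‖ < 1)
    (u : Fin d → ℝ)
    (hdet : |M.det| < 1 / 2) :
    volume {x : Fin d → ℝ | ∃ a : ℕ → ℝ, (∀ k, a k = -1 ∨ a k = 1) ∧
        x = ∑' k : ℕ, a k • (M ^ k).mulVec u} = 0 ∧
    interior {x : Fin d → ℝ | ∃ a : ℕ → ℝ, (∀ k, a k = -1 ∨ a k = 1) ∧
        x = ∑' k : ℕ, a k • (M ^ k).mulVec u} = ∅ := by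
  set v : ℕ → Fin d → ℝ := fun k => (M ^ k) *ᵥ u
  have hA : {x : Fin d → ℝ | ∃ a : ℕ → ℝ, (∀ k, a k = -1 ∨ a k = 1) ∧
      x = ∑' k : ℕ, a k • (M ^ k).mulVec u} = attractor v := by
    ext x; simp [attractor, signSequences, v, eq_comm]
  have hv : Summable fun k => ‖v k‖ := summable_norm_pow_mulVec hspec u
  let L : (Fin d → ℝ) →L[ℝ] Fin d → ℝ := LinearMap.toContinuousLinearMap (toLin' M)
  have hL : ∀ k, v (k + 1) = L (v k) := fun k => by simp [v, L, pow_succ', mulVec_mulVec]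
  have hdetL : |LinearMap.det (L : (Fin d → ℝ) →ₗ[ℝ] Fin d → ℝ)| < 1 / 2 := by
    simpa [L, LinearMap.det_toLin'] using hdet
  have hnull : volume (attractor v) = 0 :=
    addHaar_eq_zero_of_subset_union_image volume (isCompact_attractor hv).measure_lt_top.ne
      L hdetL (v 0) (-v 0) (attractor_subset_union_image hv L hL)
  rw [hA]
  exact ⟨hnull, Measure.interior_eq_empty_of_null hnull⟩

/-- If all complex eigenvalues of `M` have modulus `< 1` and
`|det M| < 1/2`, then the attractor `A_M` is Lebesgue-null; in particular it has
empty interior. -/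
theorem stmt_8 (d : ℕ) (hd : 1 ≤ d) (M : Matrix (Fin d) (Fin d) ℝ)
    (hspec : ∀ κ ∈ spectrum ℂ (M.map (algebraMap ℝ ℂ)), ‖κ‖ < 1)
    (u : Fin d → ℝ)
    (hdet : |M.det| < 1 / 2) :
    volume {x : Fin d → ℝ | ∃ a : ℕ → ℝ, (∀ k, a k = -1 ∨ a k = 1) ∧
        x = ∑' k : ℕ, a k • (M ^ k).mulVec u} = 0 ∧
    interior {x : Fin d → ℝ | ∃ a : ℕ → ℝ, (∀ k, a k = -1 ∨ a k = 1) ∧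
        x = ∑' k : ℕ, a k • (M ^ k).mulVec u} = ∅ :=
  stmt_8_general d M hspec u hdet
end
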